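/- Let (Ω, Σ, μ) be a measurable space with a countably additive probability measure μ, let t be a type mapping, and let P and P' be two possibility correspondences such that both (Ω, Σ, μ, P, t) and (Ω, Σ, μ, P', t) are regular epistemic models (with (↑t(ω)) and (↓t(ω)) measurable for every ω). Then for every ω ∈ Ω, μ(P(ω) Δ P'(ω)) = 0, where Δ denotes the symmetric difference; that is, P(ω) = P'(ω) μ-almost surely. -/

import Mathlib

open MeasureTheory

/-- An epistemic model over a measurable space `Ω` with prior `μ`. -/
structure EpiModel (Ω : Type) [MeasurableSpace Ω] (μ : Measure Ω) where
  P : Ω → Set Ω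
  t : Ω → Set Ω → ℝ
  prob : IsProbabilityMeasure μ
  P_meas : ∀ ω, MeasurableSet (P ω)
  K_meas : ∀ E : Set Ω, MeasurableSet E → MeasurableSet {ω | P ω ⊆ E}
  t_nonneg : ∀ ω E, 0 ≤ t ω E
  t_le_one : ∀ ω E, t ω E ≤ 1
  t_meas : ∀ E : Set Ω, MeasurableSet E → Measurable fun ω => t ω E
  P_pos : ∀ ω, 0 < μ (P ω)

namespace EpiModel

variable {Ω : Type} [MeasurableSpace Ω] {μ : Measure Ω}

/-- The `p`-belief operator `B^p`. -/
def B (M : EpiModel Ω μ) (p : ℝ) (E : Set Ω) : Set Ω := {ω | p ≤ M.t ω E}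

/-- The qualitative belief operator `K`. -/
def K (M : EpiModel Ω μ) (A : Set Ω) : Set Ω := {ω | M.P ω ⊆ A}

/-- `(↑t(ω))`. -/
def up (M : EpiModel Ω μ) (ω : Ω) : Set Ω :=
  {ω' | ∀ E : Set Ω, MeasurableSet E → M.t ω E ≤ M.t ω' E}

/-- `(↓t(ω))`. -/
def down (M : EpiModel Ω μ) (ω : Ω) : Set Ω :=
  {ω' | ∀ E : Set Ω, MeasurableSet E → M.t ω' E ≤ M.t ω E}

/-- `[t(ω)] = (↑t(ω)) ∩ (↓t(ω))`. -/
def cl (M : EpiModel Ω μ) (ω : Ω) : Set Ω := M.up ω ∩ M.down ω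

/-- Invariance: the prior is the expectation of the posteriors. -/
def Invariance (M : EpiModel Ω μ) : Prop :=
  ∀ E : Set Ω, MeasurableSet E → (μ E).toReal = ∫ ω, M.t ω E ∂μ

/-- Entailment: `t(ω, P(ω)) = 1`. -/
def Entailment (M : EpiModel Ω μ) : Prop := ∀ ω, M.t ω (M.P ω) = 1

/-- Self-Evidence of Beliefs: `P(ω) ⊆ (↑t(ω))`. -/
def SelfEvidence (M : EpiModel Ω μ) : Prop := ∀ ω, M.P ω ⊆ M.up ω

/-- Each `t(ω,·)` is the restriction of a countably additive probability measure. -/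
def AdditiveTypes (M : EpiModel Ω μ) : Prop :=
  ∀ ω, ∃ ν : Measure Ω, IsProbabilityMeasure ν ∧
    ∀ E : Set Ω, MeasurableSet E → M.t ω E = (ν E).toReal

/-- A regular model. -/
def Regular (M : EpiModel Ω μ) : Prop :=
  M.AdditiveTypes ∧ M.Invariance ∧ M.Entailment ∧ M.SelfEvidence

/-- Each type is the Bayes conditional probability given the information set. -/
def Bayes (M : EpiModel Ω μ) : Prop :=
  ∀ (ω : Ω) (E : Set Ω), MeasurableSet E →
    M.t ω E = (μ (E ∩ M.P ω)).toReal / (μ (M.P ω)).toReal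

/-- A discrete environment: countable states, powerset σ-algebra, full-support prior. -/
def Discrete (Ω : Type) [MeasurableSpace Ω] (μ : Measure Ω) : Prop :=
  Countable Ω ∧ (∀ A : Set Ω, MeasurableSet A) ∧ ∀ ω : Ω, 0 < μ {ω}

/-- `{P(ω)}` forms a partition. -/
def Partitional (M : EpiModel Ω μ) : Prop :=
  (∀ ω, ω ∈ M.P ω) ∧ ∀ ω ω', ω' ∈ M.P ω → M.P ω' = M.P ω

end EpiModel

namespace EpiModel

variable {Ω : Type} [MeasurableSpace Ω] {μ : Measure Ω}

/-- For an additive type, `t ω` of a set with `toReal = 1` is measure one. -/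
lemma toReal_one {ν : Measure Ω} (hν : IsProbabilityMeasure ν) {s : Set Ω}
    (h : (ν s).toReal = 1) : ν s = 1 := by
  have hne : ν s ≠ ⊤ := measure_ne_top ν s
  have := ENNReal.ofReal_toReal hne
  rw [h] at this
  simpa using this.symm

/-- complement relation for additive types -/
lemma t_compl (M : EpiModel Ω μ) (hA : M.AdditiveTypes) (ω : Ω) {E : Set Ω}
    (hEm : MeasurableSet E) : M.t ω Eᶜ = 1 - M.t ω E := by
  obtain ⟨ν, hν, hνE⟩ := hA ω
  rw [hνE E hEm, hνE Eᶜ hEm.compl, prob_compl_eq_one_sub hEm,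
    ENNReal.toReal_sub_of_le prob_le_one (by simp)]
  simp

/-- On `P ω`, the type agrees with the type at `ω`. -/
lemma t_eq_on_P (M : EpiModel Ω μ) (hA : M.AdditiveTypes) (hS : M.SelfEvidence)
    {ω ω' : Ω} (h : ω' ∈ M.P ω) {E : Set Ω} (hEm : MeasurableSet E) :
    M.t ω' E = M.t ω E := by
  have h1 : M.t ω E ≤ M.t ω' E := hS ω h E hEm
  have h2 : M.t ω Eᶜ ≤ M.t ω' Eᶜ := hS ω h Eᶜ hEm.compl
  rw [M.t_compl hA ω hEm, M.t_compl hA ω' hEm] at h2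
  linarith

/-- Key null lemma. -/
lemma null_of_t_zero (M : EpiModel Ω μ) (hreg : M.Regular) (ω₀ : Ω) {F : Set Ω}
    (hFm : MeasurableSet F) (ht0 : M.t ω₀ F = 0)
    (heq : ∀ ω'' ∈ F, ∀ E : Set Ω, MeasurableSet E → M.t ω'' E = M.t ω₀ E) :
    μ F = 0 := by
  haveI := M.prob
  obtain ⟨hA, hI, hE, hS⟩ := hreg
  have hall : ∀ ω', M.t ω' F = 0 := by
    intro ω'
    by_cases hcap : (M.P ω' ∩ F).Nonempty
    · obtain ⟨ω'', hP, hF⟩ := hcap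
      have h1 : M.t ω' F ≤ M.t ω'' F := hS ω' hP F hFm
      have h2 : M.t ω'' F = M.t ω₀ F := heq ω'' hF F hFm
      have h3 := M.t_nonneg ω' F
      linarith
    · obtain ⟨ν, hν, hνE⟩ := hA ω'
      have h1 : M.t ω' (M.P ω') = 1 := hE ω'
      rw [hνE _ (M.P_meas ω')] at h1
      have hP1 : ν (M.P ω') = 1 := toReal_one hν h1
      have hsub : F ⊆ (M.P ω')ᶜ := by
        rw [Set.not_nonempty_iff_eq_empty] at hcap
        intro x hx hxP
        exact Set.eq_empty_iff_forall_notMem.mp hcap x ⟨hxP, hx⟩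
      have hc : ν (M.P ω')ᶜ = 0 := by
        rw [prob_compl_eq_one_sub (M.P_meas ω'), hP1]; simp
      have : ν F = 0 := le_antisymm (hc ▸ measure_mono hsub) (zero_le)
      rw [hνE F hFm, this]; simp
  have hint : ∫ ω, M.t ω F ∂μ = 0 := by simp [hall]
  have := hI F hFm
  rw [hint] at this
  have hne : μ F ≠ ⊤ := measure_ne_top μ F
  exact (ENNReal.toReal_eq_zero_iff _).mp this |>.resolve_right hne

end EpiModel

/-- almost-sure uniqueness of the possibility correspondence. -/
theorem statement6 {Ω : Type} [MeasurableSpace Ω] {μ : MeasureTheory.Measure Ω}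
    (M M' : EpiModel Ω μ) (ht : M.t = M'.t)
    (hup : ∀ ω, MeasurableSet (M.up ω)) (hdown : ∀ ω, MeasurableSet (M.down ω))
    (hreg : M.Regular) (hreg' : M'.Regular) :
    ∀ ω : Ω, μ (symmDiff (M.P ω) (M'.P ω)) = 0 := by
  intro ω₀
  obtain ⟨hA, hI, hE, hS⟩ := hreg
  obtain ⟨hA', hI', hE', hS'⟩ := hreg'
  obtain ⟨ν, hν, hνE⟩ := hA ω₀
  -- ν gives mass 1 to both P ω₀ and P' ω₀
  have hP1 : ν (M.P ω₀) = 1 := by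
    have h1 : M.t ω₀ (M.P ω₀) = 1 := hE ω₀
    rw [hνE _ (M.P_meas ω₀)] at h1
    exact EpiModel.toReal_one hν h1
  have hP1' : ν (M'.P ω₀) = 1 := by
    have h1 : M.t ω₀ (M'.P ω₀) = 1 := by rw [ht]; exact hE' ω₀
    rw [hνE _ (M'.P_meas ω₀)] at h1
    exact EpiModel.toReal_one hν h1
  have hF1m : MeasurableSet (M.P ω₀ \ M'.P ω₀) := (M.P_meas ω₀).diff (M'.P_meas ω₀)
  have hF2m : MeasurableSet (M'.P ω₀ \ M.P ω₀) := (M'.P_meas ω₀).diff (M.P_meas ω₀)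
  have hz : ∀ (A B : Set Ω), MeasurableSet A → MeasurableSet B → ν B = 1 →
      M.t ω₀ (A \ B) = 0 := by
    intro A B hAm hBm hB1
    have hc : ν Bᶜ = 0 := by rw [prob_compl_eq_one_sub hBm, hB1]; simp
    have hsub : A \ B ⊆ Bᶜ := fun x hx => hx.2
    have : ν (A \ B) = 0 := le_antisymm (hc ▸ measure_mono hsub) (zero_le)
    rw [hνE _ (hAm.diff hBm), this]; simp
  have h1 : μ (M.P ω₀ \ M'.P ω₀) = 0 := by
    refine M.null_of_t_zero ⟨hA, hI, hE, hS⟩ ω₀ hF1m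
      (hz _ _ (M.P_meas ω₀) (M'.P_meas ω₀) hP1') ?_
    intro ω'' hω'' E hEm
    exact M.t_eq_on_P hA hS hω''.1 hEm
  have h2 : μ (M'.P ω₀ \ M.P ω₀) = 0 := by
    refine M.null_of_t_zero ⟨hA, hI, hE, hS⟩ ω₀ hF2m
      (hz _ _ (M'.P_meas ω₀) (M.P_meas ω₀) hP1) ?_
    intro ω'' hω'' E hEm
    have := M'.t_eq_on_P hA' hS' hω''.1 hEm
    rw [ht]; exact this
  rw [Set.symmDiff_def]
  exact le_antisymm (le_trans (measure_union_le _ _) (by rw [h1, h2]; simp)) (zero_le)
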